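/- arXiv:1702.05960 — 6 statements merged into one kernel-verified Lean document; each statement's English description precedes it below -/
import Mathlib

section
/- Let X be a measurable space, μ a probability measure on X, f* : X → ℝ measurable, and q : X × ℝ → [0,∞) measurable such that for μ-a.e. x, q(x,·) is a probability density on ℝ with respect to Lebesgue measure. Let ρ be the probability measure on X × ℝ determined by dρ(x,y) = q(x, y − f*(x)) dy dμ(x) (i.e., ρ is the composition of μ with the kernel x ↦ Lebesgue measure with density y ↦ q(x, y − f*(x))). Then for every measurable f : X → ℝ, the pushforward of ρ under the map (x,y) ↦ y − f(x) equals Lebesgue measure with density p_{E_f}(t) = ∫_X q(x, t + f(x) − f*(x)) dμ(x); moreover p_{E_f}(0) = R(f), where R(f) = ∫_X q(x, f(x) − f*(x)) dμ(x) is the modal regression risk of f (Theorem 3.4). -/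
/-!
Given `X = x`, the residual `Y - f x` is the noise shifted by `f* x - f x`, so by translation
invariance of Lebesgue measure its law has density `t ↦ q (x, t + f x - f* x)`. Mixing over `μ`
and exchanging the two integrals (Tonelli) gives the density `t ↦ ∫⁻ x, q (x, t + f x - f* x) ∂μ`.
This lower integral has total mass `1`, hence is finite for a.e. `t`, and only there does it agree
with the `ofReal` of the Bochner integral (which is `0` where the integrand is not integrable).
-/

open MeasureTheory
open scoped ENNReal

namespace MeasureTheory

namespace Measure

variable {α β γ : Type*} [MeasurableSpace α] [MeasurableSpace β] [MeasurableSpace γ]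

theorem map_bind {m : Measure α} {κ : α → Measure β} (hκ : Measurable κ) {g : β → γ}
    (hg : Measurable g) : (m.bind κ).map g = m.bind fun a => (κ a).map g := by
  have hκg : Measurable fun a => (κ a).map g := (measurable_map g hg).comp hκ
  ext s hs
  rw [map_apply hg hs, bind_apply (hg hs) hκ.aemeasurable, bind_apply hs hκg.aemeasurable]
  simp only [map_apply hg hs]

theorem measurable_map_prodMk_withDensity {ν : Measure β} [SFinite ν] {g : α → β → ℝ≥0∞}
    (hg : Measurable (Function.uncurry g)) :
    Measurable fun a => (ν.withDensity (g a)).map (Prod.mk a) := by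
  refine measurable_of_measurable_coe _ fun s hs => ?_
  simp_rw [map_apply measurable_prodMk_left hs,
    withDensity_apply _ (measurable_prodMk_left hs),
    ← lintegral_indicator (measurable_prodMk_left hs)]
  exact (hg.indicator hs).lintegral_prod_right'

theorem bind_withDensity_eq_withDensity_lintegral {μ : Measure α} [SFinite μ] {ν : Measure β}
    [SFinite ν] {k : α → β → ℝ≥0∞} (hk : Measurable (Function.uncurry k)) :
    μ.bind (fun a => ν.withDensity (k a)) = ν.withDensity fun b => ∫⁻ a, k a b ∂μ := by
  ext s hs
  rw [bind_apply hs (measurable_withDensity hk).aemeasurable, withDensity_apply _ hs]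
  simp_rw [withDensity_apply _ hs]
  exact lintegral_lintegral_swap hk.aemeasurable

theorem map_sub_const_withDensity {G : Type*} [MeasurableSpace G] [AddGroup G] [MeasurableAdd G]
    (μ : Measure G) [μ.IsAddRightInvariant] {g : G → ℝ≥0∞} (hg : Measurable g) (c : G) :
    (μ.withDensity g).map (· - c) = μ.withDensity fun t => g (t + c) := by
  have hsub := measurePreserving_sub_right μ c
  ext s hs
  rw [map_apply hsub.measurable hs, withDensity_apply _ (hsub.measurable hs),
    withDensity_apply _ hs,
    ← hsub.setLIntegral_comp_preimage (f := fun t => g (t + c)) hs (by fun_prop)]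
  simp only [sub_add_cancel]

end Measure

theorem lintegral_lintegral_add_right_swap {α G : Type*} [MeasurableSpace α] [MeasurableSpace G]
    [AddGroup G] [MeasurableAdd₂ G] {μ : Measure α} [SFinite μ] {ν : Measure G} [SFinite ν]
    [ν.IsAddRightInvariant] {Q : α → G → ℝ≥0∞} (hQ : Measurable (Function.uncurry Q))
    {c : α → G} (hc : Measurable c) :
    ∫⁻ t, ∫⁻ a, Q a (t + c a) ∂μ ∂ν = ∫⁻ a, ∫⁻ t, Q a t ∂ν ∂μ := by
  rw [← lintegral_lintegral_swap (by fun_prop)]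
  exact lintegral_congr fun a => lintegral_add_right_eq_self (Q a) (c a)

variable {α : Type*} [MeasurableSpace α] {μ : Measure α} {f : α → ℝ}

theorem ofReal_integral_eq_lintegral_ofReal_of_ne_top (hf0 : 0 ≤ᵐ[μ] f)
    (hfm : AEStronglyMeasurable f μ) (h : ∫⁻ a, ENNReal.ofReal (f a) ∂μ ≠ ∞) :
    ENNReal.ofReal (∫ a, f a ∂μ) = ∫⁻ a, ENNReal.ofReal (f a) ∂μ := by
  rw [integral_eq_lintegral_of_nonneg_ae hf0 hfm, ENNReal.ofReal_toReal h]

theorem lintegral_ofReal_eq_one_of_integral_eq_one (hf0 : 0 ≤ᵐ[μ] f)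
    (hfm : AEStronglyMeasurable f μ) (h : ∫ a, f a ∂μ = 1) :
    ∫⁻ a, ENNReal.ofReal (f a) ∂μ = 1 := by
  rwa [integral_eq_lintegral_of_nonneg_ae hf0 hfm, ENNReal.toReal_eq_one_iff] at h

end MeasureTheory

/-- Theorem 3.4: if `ρ` is the joint distribution determined by
`dρ(x,y) = q(x, y − f*(x)) dy dμ(x)`, then the pushforward of `ρ` under
`(x,y) ↦ y − f(x)` is Lebesgue measure with density
`p_{E_f}(t) = ∫ q(x, t + f(x) − f*(x)) dμ(x)`, and `p_{E_f}(0) = R(f)`. -/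
theorem residual_density_and_modal_risk
    {X : Type*} [MeasurableSpace X] (μ : Measure X) [IsProbabilityMeasure μ]
    (fstar : X → ℝ) (hfstar : Measurable fstar)
    (q : X × ℝ → ℝ) (hq_meas : Measurable q) (hq_nonneg : ∀ x t, 0 ≤ q (x, t))
    (hq_dens : ∀ᵐ x ∂μ, ∫ t, q (x, t) = 1)
    (ρ : Measure (X × ℝ))
    (hρ : ρ = μ.bind (fun x =>
      (volume.withDensity fun y => ENNReal.ofReal (q (x, y - fstar x))).map
        (fun y => (x, y))))
    (f : X → ℝ) (hf : Measurable f) :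
    ρ.map (fun z => z.2 - f z.1)
        = volume.withDensity
            (fun t => ENNReal.ofReal (∫ x, q (x, t + f x - fstar x) ∂μ)) ∧
      (∫ x, q (x, (0 : ℝ) + f x - fstar x) ∂μ) = ∫ x, q (x, f x - fstar x) ∂μ := by
  refine ⟨?_, by simp only [zero_add]⟩
  set k : X → ℝ → ℝ≥0∞ := fun x t => ENNReal.ofReal (q (x, t + f x - fstar x))
  have hk : Measurable (Function.uncurry k) := by unfold k; fun_prop
  have h_map : ρ.map (fun z => z.2 - f z.1) = volume.withDensity fun t => ∫⁻ x, k x t ∂μ := by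
    rw [hρ, Measure.map_bind (Measure.measurable_map_prodMk_withDensity (by fun_prop))
      (by fun_prop), ← Measure.bind_withDensity_eq_withDensity_lintegral hk]
    congr with x : 1
    rw [Measure.map_map (by fun_prop) measurable_prodMk_left]
    exact Measure.map_sub_const_withDensity volume (by fun_prop) (f x)
  have h_dens : ∀ᵐ x ∂μ, ∫⁻ t, ENNReal.ofReal (q (x, t)) = 1 := by
    filter_upwards [hq_dens] with x hx
    exact lintegral_ofReal_eq_one_of_integral_eq_one (.of_forall (hq_nonneg x))
      (by fun_prop : Measurable _).aestronglyMeasurable hx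
  have h_fin : ∀ᵐ t, ∫⁻ x, k x t ∂μ ≠ ∞ := by
    refine (ae_lt_top (by fun_prop) ?_).mono fun t ht => ht.ne
    simp only [k, add_sub_assoc]
    rw [lintegral_lintegral_add_right_swap (Q := fun x t => ENNReal.ofReal (q (x, t)))
      (by fun_prop) (by fun_prop), lintegral_congr_ae h_dens, lintegral_one, measure_univ]
    exact ENNReal.one_ne_top
  rw [h_map]
  refine withDensity_congr_ae (h_fin.mono fun t ht => ?_)
  exact (ofReal_integral_eq_lintegral_ofReal_of_ne_top (.of_forall fun x => hq_nonneg x _)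
    (by fun_prop : Measurable _).aestronglyMeasurable ht).symm
end

section
/- Let X be a measurable space, μ a probability measure on X, f* : X → ℝ measurable, and q : X × ℝ → [0,∞) measurable such that for each x, q(x,·) is a probability density on ℝ that is twice continuously differentiable in the second variable, with B := sup_{x∈X, t∈ℝ} |∂²_t q(x,t)| < ∞. Let φ : ℝ → [0,∞) be bounded, even, with ∫_ℝ φ(u) du = 1 and ∫_ℝ u² φ(u) du < ∞. Then for every measurable f : X → ℝ and every σ > 0, | R^σ(f) − R(f) | ≤ (σ²/2) · B · ∫_ℝ u² φ(u) du, where R(f) = ∫_X q(x, f(x) − f*(x)) dμ(x) and R^σ(f) = ∫_X ∫_ℝ (1/σ) φ((t − (f(x) − f*(x)))/σ) q(x,t) dt dμ(x) (the intermediate estimate in the proof of Theorem 4.2 showing that the generalization risk is a second-order approximation of the modal regression risk). -/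
open MeasureTheory

/-!
The substitution `t = a + σ u` turns the inner integral into `∫ φ(u) q(x, a + σ u) du`. Since `φ`
has total mass one and, being even, vanishing first moment, subtracting `q(x, a)` leaves only the
integral of `φ` against the second-order Taylor remainder of `q(x, ·)`, which is at most
`B σ² u² / 2`. This bounds the difference pointwise in `x`, and the bound survives integration
against the probability measure `μ`.
-/

lemma abs_sub_sub_mul_deriv_le_of_abs_deriv_deriv_le {g : ℝ → ℝ} (hg : ContDiff ℝ 2 g) {B : ℝ}
    (hB : ∀ t, |deriv (deriv g) t| ≤ B) (a s : ℝ) :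
    |g (a + s) - g a - s * deriv g a| ≤ B / 2 * s ^ 2 := by
  rcases eq_or_ne s 0 with rfl | hs
  · simp
  have hne : a ≠ a + s := by simpa using hs
  obtain ⟨ξ, -, hξ⟩ :=
    taylor_mean_remainder_lagrange_iteratedDeriv (n := 1) hne hg.contDiffOn
  have hderiv : derivWithin g (Set.uIcc a (a + s)) a = deriv g a :=
    ((hg.differentiable two_ne_zero) a).derivWithin (uniqueDiffOn_uIcc hne a Set.left_mem_uIcc)
  rw [taylorWithinEval_succ, taylor_within_zero_eval, iteratedDerivWithin_one, hderiv,
    iteratedDeriv_succ, iteratedDeriv_one] at hξ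
  have hrem : g (a + s) - g a - s * deriv g a = deriv (deriv g) ξ / 2 * s ^ 2 := by
    simp only [smul_eq_mul, add_sub_cancel_left] at hξ
    norm_num at hξ
    linear_combination hξ
  rw [hrem, abs_mul, abs_div, abs_two, abs_of_nonneg (sq_nonneg s)]
  gcongr
  exact hB ξ

lemma integral_id_mul_eq_zero_of_even {φ : ℝ → ℝ} (hφ : ∀ u, φ (-u) = φ u) :
    ∫ u, u * φ u = 0 := by
  have h := integral_neg_eq_self (fun u => u * φ u) volume
  simp only [hφ, neg_mul, integral_neg] at h
  linarith

lemma integrable_id_mul_of_integrable_sq_mul {φ : ℝ → ℝ} (hφ : Integrable φ)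
    (hφ_mom : Integrable (fun u => u ^ 2 * φ u)) : Integrable (fun u => u * φ u) := by
  refine (hφ.norm.add hφ_mom.norm).mono'
    (continuous_id.aestronglyMeasurable.mul hφ.aestronglyMeasurable) (.of_forall fun u => ?_)
  have h : |u| ≤ 1 + u ^ 2 := by nlinarith [sq_abs u, abs_nonneg u]
  simp only [Pi.add_apply, Real.norm_eq_abs, abs_mul, abs_pow, sq_abs]
  nlinarith [abs_nonneg (φ u)]

lemma abs_integral_mul_comp_add_mul_sub_le {g : ℝ → ℝ} (hg : ContDiff ℝ 2 g) {B : ℝ}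
    (hB : ∀ t, |deriv (deriv g) t| ≤ B) {φ : ℝ → ℝ} (hφ_nonneg : ∀ u, 0 ≤ φ u)
    (hφ_even : ∀ u, φ (-u) = φ u) (hφ_int : ∫ u, φ u = 1)
    (hφ_mom : Integrable (fun u => u ^ 2 * φ u)) (a σ : ℝ) :
    |(∫ u, φ u * g (a + σ * u)) - g a| ≤ σ ^ 2 / 2 * B * ∫ u, u ^ 2 * φ u := by
  have hφ : Integrable φ := .of_integral_ne_zero (by simp [hφ_int])
  let r : ℝ → ℝ := fun u => g (a + σ * u) - g a - σ * u * deriv g a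
  have hr_cont : Continuous r := by
    have := hg.continuous
    fun_prop
  have hbound : ∀ u, ‖φ u * r u‖ ≤ σ ^ 2 / 2 * B * (u ^ 2 * φ u) := fun u => by
    rw [Real.norm_eq_abs, abs_mul, abs_of_nonneg (hφ_nonneg u)]
    calc φ u * |r u| ≤ φ u * (B / 2 * (σ * u) ^ 2) :=
          mul_le_mul_of_nonneg_left
            (abs_sub_sub_mul_deriv_le_of_abs_deriv_deriv_le hg hB a (σ * u)) (hφ_nonneg u)
      _ = σ ^ 2 / 2 * B * (u ^ 2 * φ u) := by ring
  have hr_int : Integrable (fun u => φ u * r u) :=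
    (hφ_mom.const_mul _).mono' (hφ.aestronglyMeasurable.mul hr_cont.aestronglyMeasurable)
      (.of_forall hbound)
  have hφ₀ : Integrable fun u => g a * φ u := hφ.const_mul _
  have hφ₁ : Integrable fun u => σ * deriv g a * (u * φ u) :=
    (integrable_id_mul_of_integrable_sq_mul hφ hφ_mom).const_mul _
  have hdecomp : ∫ u, φ u * g (a + σ * u) = g a + ∫ u, φ u * r u := by
    have hsplit : (fun u => φ u * g (a + σ * u))
        = fun u => (g a * φ u + σ * deriv g a * (u * φ u)) + φ u * r u := by
      ext u; ring
    have hlin : Integrable fun u => g a * φ u + σ * deriv g a * (u * φ u) := hφ₀.add hφ₁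
    rw [hsplit, integral_add hlin hr_int, integral_add hφ₀ hφ₁, integral_const_mul,
      integral_const_mul, hφ_int, integral_id_mul_eq_zero_of_even hφ_even]
    ring
  rw [hdecomp, add_sub_cancel_left, ← integral_const_mul]
  exact (norm_integral_le_integral_norm _).trans
    (integral_mono hr_int.norm (hφ_mom.const_mul _) hbound)

lemma integral_mul_comp_div_eq_integral_comp_add_mul {σ : ℝ} (hσ : 0 < σ) (φ g : ℝ → ℝ)
    (a : ℝ) : ∫ t, 1 / σ * φ ((t - a) / σ) * g t = ∫ u, φ u * g (a + σ * u) := by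
  have hshift := integral_add_left_eq_self (μ := volume) (fun t => φ ((t - a) / σ) * g t) a
  have hscale := Measure.integral_comp_mul_left (fun v => φ (v / σ) * g (a + v)) σ
  simp only [add_sub_cancel_left] at hshift
  simp only [mul_div_cancel_left₀ _ hσ.ne', hshift, abs_inv, abs_of_pos hσ, smul_eq_mul] at hscale
  simp_rw [hscale, mul_assoc, integral_const_mul, one_div]

lemma abs_integral_sub_integral_le_of_abs_sub_le {X : Type*} [MeasurableSpace X]
    {μ : Measure X} [IsProbabilityMeasure μ] {F G : X → ℝ} (hF : AEStronglyMeasurable F μ)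
    (hG : AEStronglyMeasurable G μ) {D : ℝ} (h : ∀ x, |F x - G x| ≤ D) :
    |∫ x, F x ∂μ - ∫ x, G x ∂μ| ≤ D := by
  have hdiff : Integrable (F - G) μ := .of_bound (hF.sub hG) D (.of_forall h)
  by_cases hGi : Integrable G μ
  · have hFi : Integrable F μ := by simpa using hdiff.add hGi
    rw [← integral_sub hFi hGi]
    simpa using norm_integral_le_of_norm_le_const (μ := μ) (f := F - G)
      (.of_forall fun x => by simpa using h x)
  · have hFi : ¬ Integrable F μ := fun hFi => hGi (by simpa using hFi.sub hdiff)
    obtain ⟨x⟩ := nonempty_of_isProbabilityMeasure μ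
    simpa [integral_undef hFi, integral_undef hGi] using (abs_nonneg _).trans (h x)

theorem generalization_risk_second_order_approximation_general
    {X : Type*} [MeasurableSpace X] (μ : Measure X) [IsProbabilityMeasure μ]
    (fstar : X → ℝ) (hfstar : Measurable fstar)
    (q : X → ℝ → ℝ) (hq_meas : Measurable (Function.uncurry q))
    (hq_smooth : ∀ x, ContDiff ℝ 2 (q x))
    (B : ℝ) (hB : ∀ x t, |deriv (deriv (q x)) t| ≤ B)
    (φ : ℝ → ℝ) (hφ_nonneg : ∀ u, 0 ≤ φ u)
    (hφ_even : ∀ u, φ (-u) = φ u)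
    (hφ_int : ∫ u, φ u = 1)
    (hφ_mom : Integrable (fun u => u ^ 2 * φ u))
    (f : X → ℝ) (hf : Measurable f) (σ : ℝ) (hσ : 0 < σ) :
    |(∫ x, (∫ t, (1 / σ) * φ ((t - (f x - fstar x)) / σ) * q x t) ∂μ)
        - ∫ x, q x (f x - fstar x) ∂μ|
      ≤ σ ^ 2 / 2 * B * ∫ u, u ^ 2 * φ u := by
  simp_rw [integral_mul_comp_div_eq_integral_comp_add_mul hσ]
  have hφ : Integrable φ := .of_integral_ne_zero (by simp [hφ_int])
  have hq_comp : Measurable fun p : X × ℝ => q p.1 (f p.1 - fstar p.1 + σ * p.2) :=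
    hq_meas.comp <| measurable_fst.prodMk <|
      ((hf.comp measurable_fst).sub (hfstar.comp measurable_fst)).add
        (measurable_const.mul measurable_snd)
  refine abs_integral_sub_integral_le_of_abs_sub_le ?_ ?_ fun x =>
    abs_integral_mul_comp_add_mul_sub_le (hq_smooth x) (hB x) hφ_nonneg hφ_even hφ_int hφ_mom _ σ
  · exact AEStronglyMeasurable.integral_prod_right'
      (f := fun p : X × ℝ => φ p.2 * q p.1 (f p.1 - fstar p.1 + σ * p.2))
      (hφ.aestronglyMeasurable.comp_snd.mul hq_comp.aestronglyMeasurable)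
  · exact (hq_meas.comp (measurable_id.prodMk (hf.sub hfstar))).aestronglyMeasurable

/-- Intermediate estimate in the proof of Theorem 4.2: the generalization risk
`R^σ(f)` is a second-order (in `σ`) approximation of the modal regression risk
`R(f)`: `|R^σ(f) − R(f)| ≤ (σ²/2)·B·∫ u² φ(u) du`. -/
theorem generalization_risk_second_order_approximation
    {X : Type*} [MeasurableSpace X] (μ : Measure X) [IsProbabilityMeasure μ]
    (fstar : X → ℝ) (hfstar : Measurable fstar)
    (q : X → ℝ → ℝ) (hq_meas : Measurable (Function.uncurry q))
    (hq_nonneg : ∀ x t, 0 ≤ q x t) (hq_int : ∀ x, ∫ t, q x t = 1)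
    (hq_smooth : ∀ x, ContDiff ℝ 2 (q x))
    (B : ℝ) (hB : ∀ x t, |deriv (deriv (q x)) t| ≤ B)
    (φ : ℝ → ℝ) (hφ_meas : Measurable φ) (hφ_nonneg : ∀ u, 0 ≤ φ u)
    (hφ_bdd : ∃ Cφ : ℝ, ∀ u, φ u ≤ Cφ)
    (hφ_even : ∀ u, φ (-u) = φ u)
    (hφ_int : ∫ u, φ u = 1)
    (hφ_mom : Integrable (fun u => u ^ 2 * φ u))
    (f : X → ℝ) (hf : Measurable f) (σ : ℝ) (hσ : 0 < σ) :
    |(∫ x, (∫ t, (1 / σ) * φ ((t - (f x - fstar x)) / σ) * q x t) ∂μ)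
        - ∫ x, q x (f x - fstar x) ∂μ|
      ≤ σ ^ 2 / 2 * B * ∫ u, u ^ 2 * φ u :=
  generalization_risk_second_order_approximation_general μ fstar hfstar q hq_meas hq_smooth B hB φ
    hφ_nonneg hφ_even hφ_int hφ_mom f hf σ hσ
end

section
/- Let X be a measurable space, μ a probability measure on X, M > 0, f* : X → ℝ measurable with ‖f*‖_∞ ≤ M, and q : X × ℝ → [0,∞) measurable such that for each x, q(x,·) is a probability density on ℝ satisfying: (1) sup_{x} q(x,0) = c₃ < ∞; (2) q(x,t) ≤ q(x,0) for all t ∈ ℝ, x ∈ X; (3) inf_{x ∈ X, |t| ≤ 2M} q(x,t) = c₀ > 0; and (4) there exist s ∈ ℝ and κ > 0 such that for every x: if s = 0 then t ↦ −log q(x,t) is κ-strongly convex on [−2M, 2M]; if s > 0 then t ↦ −q(x,t)^s is κ-strongly convex on [−2M, 2M]; and if s < 0 then t ↦ q(x,t)^s is κ-strongly convex on [−2M, 2M] (strongly s-concave conditional densities). Then there exists a constant C > 0 (depending only on s, κ, c₀, c₃) such that for every measurable f : X → ℝ with ‖f‖_∞ ≤ M, ∫_X (f(x) − f*(x))² dμ(x)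 ≤ C · (R(f*) − R(f)) (Theorem 4.12, the function estimation calibration inequality). -/
open MeasureTheory

/-- `g` is `κ`-strongly convex on the interval `I`:
`g(λa + (1−λ)b) ≤ λ g(a) + (1−λ) g(b) − (κ/2) λ(1−λ)(a−b)²`. -/
def StronglyConvexOnInterval (κ : ℝ) (I : Set ℝ) (g : ℝ → ℝ) : Prop :=
  ∀ a ∈ I, ∀ b ∈ I, ∀ lam : ℝ, 0 ≤ lam → lam ≤ 1 →
    g (lam * a + (1 - lam) * b)
      ≤ lam * g a + (1 - lam) * g b - κ / 2 * lam * (1 - lam) * (a - b) ^ 2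

lemma strong_quad {κ M : ℝ} {g : ℝ → ℝ}
    (h : StronglyConvexOnInterval κ (Set.Icc (-(2*M)) (2*M)) g)
    {t : ℝ} (ht : t ∈ Set.Icc (-(2*M)) (2*M)) (h0m : (0:ℝ) ∈ Set.Icc (-(2*M)) (2*M))
    (h0 : g 0 ≤ g (t/2)) :
    κ/4 * t^2 ≤ g t - g 0 := by
  have key := h t ht 0 h0m (1/2) (by norm_num) (by norm_num)
  have e : (1/2:ℝ)*t + (1-1/2)*0 = t/2 := by ring
  rw [e] at key
  nlinarith [key, h0]

lemma rpow_lip {c₀ c₃ s : ℝ} (hc₀ : 0 < c₀) {p p0 : ℝ}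
    (hp : c₀ ≤ p) (hpp0 : p ≤ p0) (hp0 : p0 ≤ c₃) :
    |p0 ^ s - p ^ s| ≤ |s| * max (c₀ ^ (s-1)) (c₃ ^ (s-1)) * (p0 - p) := by
  set L : ℝ := |s| * max (c₀ ^ (s-1)) (c₃ ^ (s-1)) with hL
  have hc₃ : 0 < c₃ := lt_of_lt_of_le hc₀ (hp.trans (hpp0.trans hp0))
  have key : ‖(fun u : ℝ => u ^ s) p0 - (fun u : ℝ => u ^ s) p‖ ≤ L * ‖p0 - p‖ := by
    apply Convex.norm_image_sub_le_of_norm_hasDerivWithin_le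
      (f' := fun u => s * u ^ (s - 1)) ?_ ?_ (convex_Icc c₀ c₃)
      ⟨hp, hpp0.trans hp0⟩ ⟨hp.trans hpp0, hp0⟩
    · intro u hu
      exact (Real.hasDerivAt_rpow_const (Or.inl (ne_of_gt (hc₀.trans_le hu.1)))).hasDerivWithinAt
    · intro u hu
      have hu0 : 0 < u := hc₀.trans_le hu.1
      rw [norm_mul, Real.norm_eq_abs, Real.norm_eq_abs,
        abs_of_nonneg (Real.rpow_nonneg hu0.le _)]
      rcases le_or_gt 0 (s - 1) with h1 | h1
      · have : u ^ (s-1) ≤ c₃ ^ (s-1) := Real.rpow_le_rpow hu0.le hu.2 h1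
        have hm : u ^ (s-1) ≤ max (c₀ ^ (s-1)) (c₃ ^ (s-1)) := this.trans (le_max_right _ _)
        exact mul_le_mul_of_nonneg_left hm (abs_nonneg s)
      · have : u ^ (s-1) ≤ c₀ ^ (s-1) := Real.rpow_le_rpow_of_nonpos hc₀ hu.1 h1.le
        have hm : u ^ (s-1) ≤ max (c₀ ^ (s-1)) (c₃ ^ (s-1)) := this.trans (le_max_left _ _)
        exact mul_le_mul_of_nonneg_left hm (abs_nonneg s)
  simpa [Real.norm_eq_abs, abs_of_nonneg (sub_nonneg.mpr hpp0)] using key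

/-- Theorem 4.12 (function estimation calibration inequality): under the
strongly `s`-concave conditional noise density assumption, the squared
`L²(μ)`-distance between a bounded hypothesis `f` and the truth `f*` is
controlled by the excess modal regression risk `R(f*) − R(f)`. -/
theorem function_estimation_calibration
    {X : Type*} [MeasurableSpace X] (μ : Measure X) [IsProbabilityMeasure μ]
    (M : ℝ) (hM : 0 < M)
    (fstar : X → ℝ) (hfstar_meas : Measurable fstar) (hfstar_bdd : ∀ x, |fstar x| ≤ M)
    (q : X → ℝ → ℝ) (hq_meas : Measurable (Function.uncurry q))
    (hq_nonneg : ∀ x t, 0 ≤ q x t) (hq_int : ∀ x, ∫ t, q x t = 1)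
    (c₃ : ℝ) (hc₃ : ∀ x, q x 0 ≤ c₃)
    (h_mode : ∀ x t, q x t ≤ q x 0)
    (c₀ : ℝ) (hc₀_pos : 0 < c₀)
    (hc₀ : ∀ x, ∀ t : ℝ, |t| ≤ 2 * M → c₀ ≤ q x t)
    (s κ : ℝ) (hκ : 0 < κ)
    (h_concave_zero : s = 0 → ∀ x,
      StronglyConvexOnInterval κ (Set.Icc (-(2 * M)) (2 * M))
        (fun t => - Real.log (q x t)))
    (h_concave_pos : 0 < s → ∀ x,
      StronglyConvexOnInterval κ (Set.Icc (-(2 * M)) (2 * M))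
        (fun t => - (q x t) ^ s))
    (h_concave_neg : s < 0 → ∀ x,
      StronglyConvexOnInterval κ (Set.Icc (-(2 * M)) (2 * M))
        (fun t => (q x t) ^ s)) :
    ∃ C : ℝ, 0 < C ∧ ∀ f : X → ℝ, Measurable f → (∀ x, |f x| ≤ M) →
      (∫ x, (f x - fstar x) ^ 2 ∂μ)
        ≤ C * ((∫ x, q x (fstar x - fstar x) ∂μ) - ∫ x, q x (f x - fstar x) ∂μ) := by
  have hne : Nonempty X := by
    by_contra h
    rw [not_nonempty_iff] at h
    have h1 : μ Set.univ = 1 := measure_univ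
    rw [Set.eq_empty_of_isEmpty (Set.univ : Set X)] at h1
    simp at h1
  obtain ⟨x₀⟩ := hne
  have hc₃pos : 0 < c₃ :=
    lt_of_lt_of_le hc₀_pos ((hc₀ x₀ 0 (by simp; positivity)).trans (hc₃ x₀))
  set L : ℝ := if s = 0 then 1/c₀ else |s| * max (c₀ ^ (s-1)) (c₃ ^ (s-1)) with hLdef
  have hLpos : 0 < L := by
    rcases eq_or_ne s 0 with hs | hs
    · simp only [hLdef, if_pos hs]; positivity
    · simp only [hLdef, if_neg hs]
      have h1 : 0 < |s| := abs_pos.mpr hs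
      have h2 : 0 < c₀ ^ (s-1) := Real.rpow_pos_of_pos hc₀_pos _
      have : 0 < max (c₀ ^ (s-1)) (c₃ ^ (s-1)) := lt_of_lt_of_le h2 (le_max_left _ _)
      positivity
  refine ⟨4/κ * L, by positivity, ?_⟩
  intro f hf_meas hf_bdd
  have habs' : ∀ x, |f x - fstar x| ≤ 2 * M := by
    intro x
    calc |f x - fstar x| ≤ |f x| + |fstar x| := abs_sub _ _
      _ ≤ M + M := add_le_add (hf_bdd x) (hfstar_bdd x)
      _ = 2 * M := by ring
  have hpt : ∀ x, (f x - fstar x)^2 ≤ 4/κ * L * (q x 0 - q x (f x - fstar x)) := by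
    intro x
    set t := f x - fstar x with htdef
    have habs : |t| ≤ 2 * M := by
      calc |t| ≤ |f x| + |fstar x| := abs_sub _ _
        _ ≤ M + M := add_le_add (hf_bdd x) (hfstar_bdd x)
        _ = 2 * M := by ring
    have habs2 : |t/2| ≤ 2 * M := by
      rw [abs_div]
      calc |t|/|2| ≤ |t| := by rw [abs_two]; linarith [abs_nonneg t]
        _ ≤ 2*M := habs
    have ht : t ∈ Set.Icc (-(2*M)) (2*M) := abs_le.mp habs
    have h0m : (0:ℝ) ∈ Set.Icc (-(2*M)) (2*M) := by
      constructor <;> nlinarith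
    set p := q x t with hpdef
    set p0 := q x 0 with hp0def
    have hp : c₀ ≤ p := hc₀ x t habs
    have hpp0 : p ≤ p0 := h_mode x t
    have hp0 : p0 ≤ c₃ := hc₃ x
    have hph : c₀ ≤ q x (t/2) := hc₀ x (t/2) habs2
    have hquad : κ/4 * t^2 ≤ L * (p0 - p) := by
      rcases lt_trichotomy s 0 with hs | hs | hs
      · have hL : L = |s| * max (c₀ ^ (s-1)) (c₃ ^ (s-1)) := by
          rw [hLdef, if_neg (ne_of_lt hs)]
        have hsc := h_concave_neg hs x
        have h0 : p0 ^ s ≤ (q x (t/2)) ^ s :=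
          Real.rpow_le_rpow_of_nonpos (hc₀_pos.trans_le hph) (h_mode x (t/2)) hs.le
        have key := strong_quad hsc ht h0m h0
        have hlip := rpow_lip (s := s) hc₀_pos hp hpp0 hp0
        have : p ^ s - p0 ^ s ≤ |p0 ^ s - p ^ s| := by
          rw [abs_sub_comm]; exact le_abs_self _
        rw [hL]
        linarith
      · have hL : L = 1/c₀ := by rw [hLdef, if_pos hs]
        have hsc := h_concave_zero hs x
        have hphpos : 0 < q x (t/2) := hc₀_pos.trans_le hph
        have h0 : -Real.log p0 ≤ -Real.log (q x (t/2)) := by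
          have := Real.log_le_log hphpos (h_mode x (t/2))
          linarith
        have key := strong_quad hsc ht h0m h0
        have hppos : 0 < p := hc₀_pos.trans_le hp
        have hlog : Real.log p0 - Real.log p ≤ (p0 - p)/c₀ := by
          rw [← Real.log_div (ne_of_gt (lt_of_lt_of_le hc₀_pos (hp.trans hpp0))) (ne_of_gt hppos)]
          have h1 : Real.log (p0/p) ≤ p0/p - 1 :=
            Real.log_le_sub_one_of_pos (div_pos (lt_of_lt_of_le hc₀_pos (hp.trans hpp0)) hppos)
          have h2 : p0/p - 1 = (p0 - p)/p := by field_simp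
          have h3 : (p0 - p)/p ≤ (p0 - p)/c₀ :=
            div_le_div_of_nonneg_left (by linarith [hpp0]) hc₀_pos hp
          linarith
        rw [hL]
        have : κ/4 * t^2 ≤ Real.log p0 - Real.log p := by linarith
        calc κ/4 * t^2 ≤ (p0 - p)/c₀ := this.trans hlog
          _ = 1/c₀ * (p0 - p) := by ring
      · have hL : L = |s| * max (c₀ ^ (s-1)) (c₃ ^ (s-1)) := by
          rw [hLdef, if_neg (ne_of_gt hs)]
        have hsc := h_concave_pos hs x
        have h0 : -(p0 ^ s) ≤ -((q x (t/2)) ^ s) := by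
          have := Real.rpow_le_rpow (hq_nonneg x (t/2)) (h_mode x (t/2)) hs.le
          linarith
        have key := strong_quad hsc ht h0m h0
        have hlip := rpow_lip (s := s) hc₀_pos hp hpp0 hp0
        have : p0 ^ s - p ^ s ≤ |p0 ^ s - p ^ s| := le_abs_self _
        rw [hL]
        linarith
    have hκ' : κ ≠ 0 := ne_of_gt hκ
    have h4 : (0:ℝ) < 4/κ := by positivity
    have hmul := mul_le_mul_of_nonneg_left hquad h4.le
    calc t^2 = 4/κ * (κ/4 * t^2) := by field_simp; try ring

      _ ≤ 4/κ * (L * (p0 - p)) := hmul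
      _ = 4/κ * L * (p0 - p) := by ring
  have meas_diff : Measurable fun x => f x - fstar x := hf_meas.sub hfstar_meas
  have meas_q0 : Measurable fun x => q x 0 :=
    hq_meas.comp (measurable_id.prodMk measurable_const)
  have meas_qt : Measurable fun x => q x (f x - fstar x) :=
    hq_meas.comp (measurable_id.prodMk meas_diff)
  have int_q0 : Integrable (fun x => q x 0) μ :=
    ⟨meas_q0.aestronglyMeasurable, HasFiniteIntegral.of_bounded (C := c₃)
      (ae_of_all _ fun x => by
        rw [Real.norm_eq_abs, abs_of_nonneg (hq_nonneg x 0)]; exact hc₃ x)⟩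
  have int_qt : Integrable (fun x => q x (f x - fstar x)) μ :=
    ⟨meas_qt.aestronglyMeasurable, HasFiniteIntegral.of_bounded (C := c₃)
      (ae_of_all _ fun x => by
        rw [Real.norm_eq_abs, abs_of_nonneg (hq_nonneg x _)]
        exact (h_mode x _).trans (hc₃ x))⟩
  have int_sq : Integrable (fun x => (f x - fstar x)^2) μ :=
    ⟨(meas_diff.pow_const 2).aestronglyMeasurable,
      HasFiniteIntegral.of_bounded (C := (2*M)^2)
      (ae_of_all _ fun x => by
        rw [Real.norm_eq_abs, abs_of_nonneg (sq_nonneg _), ← sq_abs]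
        exact pow_le_pow_left₀ (abs_nonneg _) (habs' x) 2)⟩
  simp only [sub_self]
  calc ∫ x, (f x - fstar x)^2 ∂μ
      ≤ ∫ x, 4/κ * L * (q x 0 - q x (f x - fstar x)) ∂μ :=
        integral_mono int_sq ((int_q0.sub int_qt).const_mul _) hpt
    _ = 4/κ * L * ((∫ x, q x 0 ∂μ) - ∫ x, q x (f x - fstar x) ∂μ) := by
        rw [integral_const_mul, integral_sub int_q0 int_qt]
end

section
/- Let M > 0, κ > 0, c₀ > 0 and let q : ℝ → (0,∞) be a function such that q(t) ≤ q(0) for all t ∈ ℝ, q(t) ≥ c₀ for all |t| ≤ 2M, and t ↦ −log q(t) is κ-strongly convex on [−2M, 2M]. Then for every a with |a| ≤ 2M, (κ c₀ / 2) · a² ≤ q(0) − q(a) (the pointwise s = 0 case estimate in the proof of Theorem 4.12). -/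
/-- The pointwise `s = 0` case estimate in the proof of Theorem 4.12: for a
strongly log-concave density `q` with mode at `0`, bounded below by `c₀` on
`[−2M, 2M]`, one has `(κ c₀ / 2) a² ≤ q(0) − q(a)` for `|a| ≤ 2M`. -/
theorem pointwise_log_concave_estimate
    (M κ c₀ : ℝ) (hM : 0 < M) (hκ : 0 < κ) (hc₀ : 0 < c₀)
    (q : ℝ → ℝ) (hq_pos : ∀ t, 0 < q t)
    (h_mode : ∀ t, q t ≤ q 0)
    (h_lower : ∀ t : ℝ, |t| ≤ 2 * M → c₀ ≤ q t)
    (h_sc : StronglyConvexOnInterval κ (Set.Icc (-(2 * M)) (2 * M))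
      (fun t => - Real.log (q t))) :
    ∀ a : ℝ, |a| ≤ 2 * M → κ * c₀ / 2 * a ^ 2 ≤ q 0 - q a := by

  intro a ha
  have h0mem : (0:ℝ) ∈ Set.Icc (-(2*M)) (2*M) := by
    constructor <;> nlinarith
  have hamem : a ∈ Set.Icc (-(2*M)) (2*M) := abs_le.mp ha
  have hqa := hq_pos a
  have hq0 := hq_pos 0
  have hca := h_lower a ha
  have hgmin : ∀ t : ℝ, - Real.log (q 0) ≤ - Real.log (q t) := by
    intro t
    have := Real.log_le_log (hq_pos t) (h_mode t)
    linarith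
  have key : ∀ lam : ℝ, 0 < lam → lam ≤ 1 →
      κ/2 * (1 - lam) * a^2 ≤ (- Real.log (q a)) - (- Real.log (q 0)) := by
    intro lam hl hl1
    have hsc := h_sc a hamem 0 h0mem lam hl.le hl1
    simp only at hsc
    have h1 := hgmin (lam * a + (1 - lam) * 0)
    nlinarith [hsc, h1]
  have hD : κ/2 * a^2 ≤ Real.log (q 0) - Real.log (q a) := by
    have hD' : κ/2 * a^2 ≤ (- Real.log (q a)) - (- Real.log (q 0)) := by
      apply le_of_forall_pos_le_add
      intro ε hε
      have hden : (0:ℝ) < κ/2 * a^2 + 1 := by positivity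
      set lam := min 1 (ε / (κ/2 * a^2 + 1)) with hlam
      have hl0 : 0 < lam := lt_min one_pos (div_pos hε hden)
      have hl1 : lam ≤ 1 := min_le_left _ _
      have h2 : κ/2 * lam * a^2 ≤ ε := by
        have hle : lam ≤ ε / (κ/2 * a^2 + 1) := min_le_right _ _
        have h3 : lam * (κ/2 * a^2 + 1) ≤ ε := (le_div_iff₀ hden).mp hle
        nlinarith
      have := key lam hl0 hl1
      nlinarith
    linarith
  have hlog : Real.log (q 0 / q a) ≤ q 0 / q a - 1 :=
    Real.log_le_sub_one_of_pos (div_pos hq0 hqa)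
  rw [Real.log_div (ne_of_gt hq0) (ne_of_gt hqa)] at hlog
  have h4 : q a * (Real.log (q 0) - Real.log (q a)) ≤ q 0 - q a := by
    have h := mul_le_mul_of_nonneg_left hlog hqa.le
    have he : q a * (q 0 / q a - 1) = q 0 - q a := by field_simp
    linarith [he ▸ h]
  have h5 : c₀ * (κ/2 * a^2) ≤ q a * (Real.log (q 0) - Real.log (q a)) :=
    mul_le_mul hca hD (by positivity) hqa.le
  nlinarith
end

section
/- Let M > 0, κ > 0, c₀ > 0, c₃ > 0, s > 0 and let q : ℝ → (0,∞) be a function such that q(t) ≤ q(0) ≤ c₃ for all t ∈ ℝ, q(t) ≥ c₀ for all |t| ≤ 2M, and t ↦ −q(t)^s is κ-strongly convex on [−2M, 2M]. Then for every a with |a| ≤ 2M, (κ / 2) · a² ≤ q(0)^s − q(a)^s ≤ max{ s c₀^{s−1}, s c₃^{s−1} } · (q(0) − q(a)); in particular a² ≤ (2/κ) max{ s c₀^{s−1}, s c₃^{s−1} } · (q(0) − q(a)) (the pointwise s > 0 case estimate in the proof of Theorem 4.12). -/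
/-- Mean value style bound: for `0 < c₀ ≤ y ≤ x ≤ c₃`, one has
`x^s - y^s ≤ max (s c₀^{s-1}) (s c₃^{s-1}) (x - y)`. -/
lemma rpow_sub_rpow_le (c₀ c₃ s x y : ℝ) (hc₀ : 0 < c₀) (hs : 0 < s)
    (h0y : c₀ ≤ y) (hyx : y ≤ x) (hxc : x ≤ c₃) :
    x ^ s - y ^ s ≤ max (s * c₀ ^ (s - 1)) (s * c₃ ^ (s - 1)) * (x - y) := by
  rcases eq_or_lt_of_le hyx with h | h
  · subst h; simp
  · have hy : 0 < y := lt_of_lt_of_le hc₀ h0y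
    obtain ⟨c, hc, hceq⟩ := exists_hasDerivAt_eq_slope (fun t : ℝ => t ^ s)
      (fun t => s * t ^ (s - 1)) h
      (fun t ht => (Real.continuousAt_rpow_const t s
        (Or.inl (ne_of_gt (lt_of_lt_of_le hy ht.1)))).continuousWithinAt)
      (fun t ht => Real.hasDerivAt_rpow_const (Or.inl (ne_of_gt (lt_of_lt_of_le hy ht.1.le))))
    have hcpos : 0 < c := lt_trans hy hc.1
    have hle : s * c ^ (s - 1) ≤ max (s * c₀ ^ (s - 1)) (s * c₃ ^ (s - 1)) := by
      rcases le_or_gt 1 s with h1 | h1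
      · refine le_max_of_le_right (mul_le_mul_of_nonneg_left ?_ hs.le)
        exact Real.rpow_le_rpow hcpos.le (le_trans hc.2.le hxc) (by linarith)
      · refine le_max_of_le_left (mul_le_mul_of_nonneg_left ?_ hs.le)
        exact Real.rpow_le_rpow_of_nonpos hc₀ (le_trans h0y hc.1.le) (by linarith)
    have hxy : 0 < x - y := by linarith
    have heq2 : s * c ^ (s - 1) * (x - y) = x ^ s - y ^ s := by
      rw [hceq]; field_simp
    calc x ^ s - y ^ s = s * c ^ (s - 1) * (x - y) := heq2.symm
      _ ≤ max (s * c₀ ^ (s - 1)) (s * c₃ ^ (s - 1)) * (x - y) :=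
        mul_le_mul_of_nonneg_right hle hxy.le

/-- The pointwise `s > 0` case estimate in the proof of Theorem 4.12: for a
density `q` with mode at `0`, peak value at most `c₃`, bounded below by `c₀`
on `[−2M, 2M]`, and with `−q^s` `κ`-strongly convex on `[−2M, 2M]`, one has
`(κ/2) a² ≤ q(0)^s − q(a)^s ≤ max{s c₀^{s−1}, s c₃^{s−1}} (q(0) − q(a))` and in
particular `a² ≤ (2/κ) max{s c₀^{s−1}, s c₃^{s−1}} (q(0) − q(a))` for `|a| ≤ 2M`. -/
theorem pointwise_s_pos_estimate
    (M κ c₀ c₃ s : ℝ) (hM : 0 < M) (hκ : 0 < κ) (hc₀ : 0 < c₀) (hc₃ : 0 < c₃)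
    (hs : 0 < s)
    (q : ℝ → ℝ) (hq_pos : ∀ t, 0 < q t)
    (h_mode : ∀ t, q t ≤ q 0) (h_peak : q 0 ≤ c₃)
    (h_lower : ∀ t : ℝ, |t| ≤ 2 * M → c₀ ≤ q t)
    (h_sc : StronglyConvexOnInterval κ (Set.Icc (-(2 * M)) (2 * M))
      (fun t => - (q t) ^ s)) :
    ∀ a : ℝ, |a| ≤ 2 * M →
      κ / 2 * a ^ 2 ≤ q 0 ^ s - q a ^ s ∧
      q 0 ^ s - q a ^ s
        ≤ max (s * c₀ ^ (s - 1)) (s * c₃ ^ (s - 1)) * (q 0 - q a) ∧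
      a ^ 2 ≤ 2 / κ * max (s * c₀ ^ (s - 1)) (s * c₃ ^ (s - 1)) * (q 0 - q a) := by
  intro a ha
  have haI : a ∈ Set.Icc (-(2 * M)) (2 * M) := by
    rw [Set.mem_Icc]; constructor <;> [linarith [neg_abs_le a]; linarith [le_abs_self a]]
  have h0I : (0 : ℝ) ∈ Set.Icc (-(2 * M)) (2 * M) := by
    rw [Set.mem_Icc]; constructor <;> linarith
  -- D = q 0 ^ s - q a ^ s ≥ 0
  have hD : 0 ≤ q 0 ^ s - q a ^ s := by
    have := Real.rpow_le_rpow (hq_pos a).le (h_mode a) hs.le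
    linarith
  -- Part 1: strong convexity lower bound
  have part1 : κ / 2 * a ^ 2 ≤ q 0 ^ s - q a ^ s := by
    have key : ∀ lam : ℝ, 0 < lam → lam ≤ 1 →
        κ / 2 * (1 - lam) * a ^ 2 ≤ q 0 ^ s - q a ^ s := by
      intro lam hl0 hl1
      have hsc := h_sc a haI 0 h0I lam hl0.le hl1
      simp only [mul_zero, add_zero, sub_zero] at hsc
      -- g 0 ≤ g (lam * a)
      have hmin : -(q 0) ^ s ≤ -(q (lam * a)) ^ s := by
        have := Real.rpow_le_rpow (hq_pos (lam * a)).le (h_mode (lam * a)) hs.le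
        linarith
      have h2 : -(q 0) ^ s ≤ lam * (-(q a) ^ s) + (1 - lam) * (-(q 0) ^ s)
          - κ / 2 * lam * (1 - lam) * a ^ 2 := le_trans hmin hsc
      have h3 : κ / 2 * lam * (1 - lam) * a ^ 2 ≤ lam * (q 0 ^ s - q a ^ s) := by nlinarith
      nlinarith
    by_contra hlt
    push_neg at hlt
    set D := q 0 ^ s - q a ^ s with hDdef
    set C := κ / 2 * a ^ 2 with hCdef
    have hC : 0 < C := lt_of_le_of_lt hD hlt
    have hμ0 : 0 ≤ D / C := div_nonneg hD hC.le
    have hμ1 : D / C < 1 := (div_lt_one hC).mpr hlt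
    -- use lam = 1 - (D/C + 1)/2
    have hk := key (1 - (D / C + 1) / 2) (by linarith) (by linarith)
    have hDC : D / C * C = D := div_mul_cancel₀ D hC.ne'
    have h5 : κ / 2 * (1 - (1 - (D / C + 1) / 2)) * a ^ 2 = (D / C * C + C) / 2 := by
      rw [hCdef]; ring
    rw [hDC] at h5
    linarith [hk]
  refine ⟨part1, ?_, ?_⟩
  · exact rpow_sub_rpow_le c₀ c₃ s (q 0) (q a) hc₀ hs (h_lower a ha) (h_mode a) h_peak
  · have part2 := rpow_sub_rpow_le c₀ c₃ s (q 0) (q a) hc₀ hs (h_lower a ha) (h_mode a) h_peak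
    have h2κ : 0 < 2 / κ := by positivity
    calc a ^ 2 = 2 / κ * (κ / 2 * a ^ 2) := by field_simp
      _ ≤ 2 / κ * (q 0 ^ s - q a ^ s) := by
          exact mul_le_mul_of_nonneg_left part1 h2κ.le
      _ ≤ 2 / κ * (max (s * c₀ ^ (s - 1)) (s * c₃ ^ (s - 1)) * (q 0 - q a)) :=
          mul_le_mul_of_nonneg_left (le_trans part2 (le_refl _)) h2κ.le
      _ = 2 / κ * max (s * c₀ ^ (s - 1)) (s * c₃ ^ (s - 1)) * (q 0 - q a) := by ring
end

section
/- Let M > 0, κ > 0, c₀ > 0, s < 0 and let q : ℝ → (0,∞) be a function such that q(t) ≤ q(0) for all t ∈ ℝ, q(t) ≥ c₀ for all |t| ≤ 2M, and t ↦ q(t)^s is κ-strongly convex on [−2M, 2M]. Then for every a with |a| ≤ 2M, (κ / 2) · a² ≤ q(a)^s − q(0)^s ≤ |s| c₀^{s−1} · (q(0) − q(a)); in particular a² ≤ (2 |s| c₀^{s−1} / κ) · (q(0) − q(a)) (the pointwise s < 0 case estimate in the proof of Theorem 4.12). -/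
open Real Set


/-- MVT estimate: for `0 < x ≤ y` and `s < 0`, `x^s - y^s ≤ (-s) * x^(s-1) * (y-x)`. -/
lemma rpow_diff_le_aux (x y s : ℝ) (hx : 0 < x) (hxy : x ≤ y) (hs : s < 0) :
    x ^ s - y ^ s ≤ (-s) * x ^ (s - 1) * (y - x) := by
  rcases eq_or_lt_of_le hxy with rfl | hlt
  · simp
  · have hcont : ContinuousOn (fun t : ℝ => t ^ s) (Icc x y) := by
      apply ContinuousOn.rpow_const continuousOn_id
      intro t ht
      exact Or.inl (ne_of_gt (lt_of_lt_of_le hx ht.1))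
    have hderiv : ∀ t ∈ Ioo x y, HasDerivAt (fun t : ℝ => t ^ s) (s * t ^ (s - 1)) t :=
      fun t ht => Real.hasDerivAt_rpow_const (Or.inl (ne_of_gt (lt_trans hx ht.1)))
    obtain ⟨c, hc, hceq⟩ := exists_hasDerivAt_eq_slope (fun t : ℝ => t ^ s)
      (fun t => s * t ^ (s - 1)) hlt hcont hderiv
    have hyx : 0 < y - x := sub_pos.mpr hlt
    have heq : y ^ s - x ^ s = s * c ^ (s - 1) * (y - x) := by
      field_simp at hceq
      linarith [hceq]
    have hcs : c ^ (s - 1) ≤ x ^ (s - 1) :=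
      Real.rpow_le_rpow_of_nonpos hx hc.1.le (by linarith)
    have hmain : (-s) * c ^ (s - 1) * (y - x) ≤ (-s) * x ^ (s - 1) * (y - x) := by
      apply mul_le_mul_of_nonneg_right _ hyx.le
      exact mul_le_mul_of_nonneg_left hcs (by linarith)
    linarith

/-- The pointwise `s < 0` case estimate in the proof of Theorem 4.12: for a
density `q` with mode at `0`, bounded below by `c₀` on `[−2M, 2M]`, and with
`q^s` `κ`-strongly convex on `[−2M, 2M]` (`s < 0`), one has
`(κ/2) a² ≤ q(a)^s − q(0)^s ≤ |s| c₀^{s−1} (q(0) − q(a))` and in particular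
`a² ≤ (2 |s| c₀^{s−1} / κ) (q(0) − q(a))` for `|a| ≤ 2M`. -/
theorem pointwise_s_neg_estimate
    (M κ c₀ s : ℝ) (hM : 0 < M) (hκ : 0 < κ) (hc₀ : 0 < c₀) (hs : s < 0)
    (q : ℝ → ℝ) (hq_pos : ∀ t, 0 < q t)
    (h_mode : ∀ t, q t ≤ q 0)
    (h_lower : ∀ t : ℝ, |t| ≤ 2 * M → c₀ ≤ q t)
    (h_sc : StronglyConvexOnInterval κ (Set.Icc (-(2 * M)) (2 * M))
      (fun t => (q t) ^ s)) :
    ∀ a : ℝ, |a| ≤ 2 * M →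
      κ / 2 * a ^ 2 ≤ q a ^ s - q 0 ^ s ∧
      q a ^ s - q 0 ^ s ≤ |s| * c₀ ^ (s - 1) * (q 0 - q a) ∧
      a ^ 2 ≤ 2 * |s| * c₀ ^ (s - 1) / κ * (q 0 - q a) := by
  intro a ha
  have hmem : a ∈ Set.Icc (-(2 * M)) (2 * M) := by
    rw [Set.mem_Icc]; constructor <;> [linarith [abs_le.mp ha]; exact (abs_le.mp ha).2]
  have h0mem : (0 : ℝ) ∈ Set.Icc (-(2 * M)) (2 * M) := by
    rw [Set.mem_Icc]; constructor <;> linarith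
  have hmin : ∀ t : ℝ, q 0 ^ s ≤ q t ^ s := fun t =>
    Real.rpow_le_rpow_of_nonpos (hq_pos t) (h_mode t) hs.le
  -- Part 1
  have part1 : κ / 2 * a ^ 2 ≤ q a ^ s - q 0 ^ s := by
    apply le_of_forall_pos_le_add
    intro ε hε
    set D : ℝ := κ / 2 * a ^ 2 + 1 with hD
    have hDpos : 0 < D := by positivity
    set lam : ℝ := min 1 (ε / D) with hlam
    have hlampos : 0 < lam := lt_min one_pos (div_pos hε hDpos)
    have hlam1 : lam ≤ 1 := min_le_left _ _
    have hlamD : lam * D ≤ ε := (le_div_iff₀ hDpos).mp (min_le_right _ _)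
    clear_value lam D
    have hlamsmall : lam * (κ / 2 * a ^ 2) ≤ ε := by
      have hexp : lam * (κ / 2 * a ^ 2) = lam * D - lam := by rw [hD]; ring
      linarith
    have h1 := h_sc a hmem 0 h0mem lam hlampos.le hlam1
    simp only [mul_zero, add_zero, sub_zero] at h1
    have h2 : κ / 2 * lam * (1 - lam) * a ^ 2 ≤ lam * (q a ^ s - q 0 ^ s) := by
      have := hmin (lam * a)
      nlinarith
    have h3 : lam * (κ / 2 * (1 - lam) * a ^ 2) ≤ lam * (q a ^ s - q 0 ^ s) := by
      rw [show lam * (κ / 2 * (1 - lam) * a ^ 2) = κ / 2 * lam * (1 - lam) * a ^ 2 from by ring]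
      exact h2
    have h4 := le_of_mul_le_mul_left h3 hlampos
    nlinarith
  -- Part 2
  have part2 : q a ^ s - q 0 ^ s ≤ |s| * c₀ ^ (s - 1) * (q 0 - q a) := by
    have hmvt := rpow_diff_le_aux (q a) (q 0) s (hq_pos a) (h_mode a) hs
    have hca : c₀ ≤ q a := h_lower a ha
    have hpow : q a ^ (s - 1) ≤ c₀ ^ (s - 1) :=
      Real.rpow_le_rpow_of_nonpos hc₀ hca (by linarith)
    have habs : |s| = -s := abs_of_neg hs
    rw [habs]
    have hqa : 0 ≤ q 0 - q a := by linarith [h_mode a]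
    have : (-s) * q a ^ (s - 1) * (q 0 - q a) ≤ (-s) * c₀ ^ (s - 1) * (q 0 - q a) := by
      apply mul_le_mul_of_nonneg_right _ hqa
      exact mul_le_mul_of_nonneg_left hpow (by linarith)
    linarith
  refine ⟨part1, part2, ?_⟩
  rw [div_mul_eq_mul_div, le_div_iff₀ hκ]
  nlinarith
end
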